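/- Let s > 1, c > 0, and L > 0 be reals, let m ≥ 2 be a natural number. Then for every natural n ≥ 1: ∑_{k=0}^{n} binom(n,k)·(m−1)^k·exp(−c·(k·L)^s) ≤ 1 + n·exp( max_{1 ≤ k ≤ n, k ∈ ℝ} ( k + k·log(n/k) + k·log(m−1) − c·k^s·L^s ) ), and moreover this maximum is O((log n)^{s/(s−1)}) as n → ∞. -/

import Mathlib

/-!
Bounding `n.choose k ≤ (e n / k) ^ k` turns the `k`-th summand into `exp (f k)`, where
`f k = k + k log (n / k) + k log a - c k^s L^s`, so the sum is at most `1 + n exp (sup f)`.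
For the growth of `sup f`, use `1 + log a ≤ a` and `log (n / x) ≤ log n` to get
`f x ≤ x A - b x^s` with `A = a + log n` and `b = c L^s`; maximising over `x` gives
`A^(s/(s-1)) / b^(1/(s-1))`, which is `O((log n)^(s/(s-1)))`.
-/

open Real Set Finset
open scoped Nat

theorem Nat.choose_le_exp_mul_div_pow (n : ℕ) {k : ℕ} (hk : 0 < k) :
    (n.choose k : ℝ) ≤ exp k * ((n : ℝ) / k) ^ k := by
  have hk' : (0 : ℝ) < k := by exact_mod_cast hk
  calc (n.choose k : ℝ) ≤ (n : ℝ) ^ k / k ! := Nat.choose_le_pow_div k n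
    _ = ((n : ℝ) / k) ^ k * ((k : ℝ) ^ k / k !) := by rw [div_pow]; field_simp
    _ ≤ ((n : ℝ) / k) ^ k * exp k := by gcongr; exact pow_div_factorial_le_exp _ hk'.le k
    _ = exp k * ((n : ℝ) / k) ^ k := mul_comm _ _

theorem Real.one_add_rpow_le {t q : ℝ} (ht : 0 ≤ t) (hq : 1 ≤ q) :
    (1 + t) ^ q ≤ 2 ^ (q - 1) * (1 + t ^ q) := by
  lift t to NNReal using ht
  have := NNReal.rpow_add_le_mul_rpow_add_rpow 1 t hq
  rw [NNReal.one_rpow] at this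
  exact_mod_cast this

/-- Split at `K = (A / b)^(1/(s-1))`: below `K` drop `b x^s`, above it `x A ≤ b x^s`. -/
theorem Real.mul_sub_mul_rpow_le {s b A x : ℝ} (hs : 1 < s) (hb : 0 < b) (hA : 0 ≤ A)
    (hx : 0 ≤ x) : x * A - b * x ^ s ≤ A ^ (s / (s - 1)) / b ^ (1 / (s - 1)) := by
  have hs1 : 0 < s - 1 := by linarith
  set K := (A / b) ^ (1 / (s - 1)) with hK
  have hK0 : 0 ≤ K := by positivity
  have hKs : K ^ (s - 1) = A / b := by
    rw [hK, ← rpow_mul (by positivity), one_div_mul_cancel hs1.ne', rpow_one]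
  have hmax : x * A - b * x ^ s ≤ K * A := by
    rcases le_total x K with h | h
    · nlinarith [rpow_nonneg hx s]
    · have hxs : x ^ s = x * x ^ (s - 1) := by
        rw [← rpow_one_add' hx (by linarith), add_sub_cancel]
      have : A ≤ b * x ^ (s - 1) := by
        rw [← div_le_iff₀' hb, ← hKs]; exact rpow_le_rpow hK0 h hs1.le
      nlinarith
  calc x * A - b * x ^ s ≤ K * A := hmax
    _ = A ^ (1 / (s - 1)) * A ^ (1 : ℝ) / b ^ (1 / (s - 1)) := by
        rw [hK, div_rpow hA hb.le, rpow_one]; ring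
    _ = A ^ (s / (s - 1)) / b ^ (1 / (s - 1)) := by
        rw [← rpow_add' hA (by positivity)]
        congr 2
        field_simp
        ring

section

variable {s c L a : ℝ}

theorem choose_mul_pow_mul_exp_le_exp {n k : ℕ} (hk : 1 ≤ k) (hkn : k ≤ n) (ha : 0 < a)
    (hL : 0 ≤ L) :
    (n.choose k : ℝ) * a ^ k * exp (-c * ((k : ℝ) * L) ^ s)
      ≤ exp (k + k * log ((n : ℝ) / k) + k * log a - c * (k : ℝ) ^ s * L ^ s) := by
  have hk0 : (0 : ℝ) < k := by exact_mod_cast hk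
  have hnk : (0 : ℝ) < n / k := div_pos (by exact_mod_cast hk.trans hkn) hk0
  have hexp : exp (k + k * log ((n : ℝ) / k) + k * log a - c * (k : ℝ) ^ s * L ^ s)
      = exp k * ((n : ℝ) / k) ^ k * a ^ k * exp (-c * ((k : ℝ) * L) ^ s) := by
    rw [mul_rpow hk0.le hL, sub_eq_add_neg, exp_add, exp_add, exp_add, exp_nat_mul,
      exp_nat_mul, exp_log hnk, exp_log ha]
    ring_nf
  rw [hexp]
  gcongr
  exact Nat.choose_le_exp_mul_div_pow n hk

theorem sum_choose_mul_pow_mul_exp_le (hs : s ≠ 0) (ha : 0 < a) (hL : 0 ≤ L) (n : ℕ) {M : ℝ}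
    (hM : ∀ k : ℕ, 1 ≤ k → k ≤ n →
      k + k * log ((n : ℝ) / k) + k * log a - c * (k : ℝ) ^ s * L ^ s ≤ M) :
    ∑ k ∈ range (n + 1), (n.choose k : ℝ) * a ^ k * exp (-c * ((k : ℝ) * L) ^ s)
      ≤ 1 + n * exp M := by
  rw [sum_range_succ']
  calc ∑ k ∈ range n, (n.choose (k + 1) : ℝ) * a ^ (k + 1)
          * exp (-c * (((k + 1 : ℕ) : ℝ) * L) ^ s)
        + (n.choose 0 : ℝ) * a ^ 0 * exp (-c * (((0 : ℕ) : ℝ) * L) ^ s)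
      ≤ ∑ _k ∈ range n, exp M + 1 := by
        gcongr with k hk
        · have hkn : k + 1 ≤ n := mem_range.1 hk
          exact (choose_mul_pow_mul_exp_le_exp (by omega) hkn ha hL).trans
            (exp_le_exp.2 (hM (k + 1) (by omega) hkn))
        · simp [zero_rpow hs]
    _ = 1 + n * exp M := by rw [sum_const, card_range, nsmul_eq_mul, add_comm]

theorem exponent_le_mul_one_add_log_rpow (hs : 1 < s) (hc : 0 < c) (hL : 0 < L) (ha : 0 < a) {n x : ℝ}
    (hn : 1 ≤ n) (hx : 1 ≤ x) :
    x + x * log (n / x) + x * log a - c * x ^ s * L ^ s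
      ≤ (a + 1) ^ (s / (s - 1)) * 2 ^ (s / (s - 1) - 1) / (c * L ^ s) ^ (1 / (s - 1))
        * (1 + log n ^ (s / (s - 1))) := by
  have hq : 1 ≤ s / (s - 1) := by rw [le_div_iff₀ (by linarith)]; linarith
  have hb : 0 < c * L ^ s := by positivity
  have hlogn : 0 ≤ log n := log_nonneg hn
  have hlin : x + x * log (n / x) + x * log a - c * x ^ s * L ^ s
      ≤ x * (a + log n) - c * L ^ s * x ^ s := by
    have h1 : log (n / x) ≤ log n := by
      rw [log_div (by positivity) (by positivity)]; linarith [log_nonneg hx]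
    have h2 : log a ≤ a - 1 := log_le_sub_one_of_pos ha
    nlinarith
  calc x + x * log (n / x) + x * log a - c * x ^ s * L ^ s
      ≤ x * (a + log n) - c * L ^ s * x ^ s := hlin
    _ ≤ (a + log n) ^ (s / (s - 1)) / (c * L ^ s) ^ (1 / (s - 1)) :=
        mul_sub_mul_rpow_le hs hb (by positivity) (by linarith)
    _ ≤ ((a + 1) * (1 + log n)) ^ (s / (s - 1)) / (c * L ^ s) ^ (1 / (s - 1)) := by
        gcongr; nlinarith
    _ = (a + 1) ^ (s / (s - 1)) * (1 + log n) ^ (s / (s - 1)) / (c * L ^ s) ^ (1 / (s - 1)) := by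
        rw [mul_rpow (by linarith) (by linarith)]
    _ ≤ (a + 1) ^ (s / (s - 1)) * (2 ^ (s / (s - 1) - 1) * (1 + log n ^ (s / (s - 1))))
          / (c * L ^ s) ^ (1 / (s - 1)) := by
        gcongr; exact one_add_rpow_le hlogn hq
    _ = _ := by ring

end

theorem stmt_17 (s c L : ℝ) (hs : 1 < s) (hc : 0 < c) (hL : 0 < L)
    (m : ℕ) (hm : 2 ≤ m) :
    (∀ n : ℕ, 1 ≤ n →
      ∑ k ∈ Finset.range (n + 1),
          (n.choose k : ℝ) * ((m : ℝ) - 1) ^ k * Real.exp (-c * ((k : ℝ) * L) ^ s)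
        ≤ 1 + (n : ℝ) * Real.exp (sSup
            ((fun k : ℝ => k + k * Real.log ((n : ℝ) / k)
                + k * Real.log ((m : ℝ) - 1) - c * k ^ s * L ^ s) ''
              Set.Icc 1 (n : ℝ)))) ∧
    ∃ C : ℝ, ∀ n : ℕ, 1 ≤ n →
      sSup ((fun k : ℝ => k + k * Real.log ((n : ℝ) / k)
              + k * Real.log ((m : ℝ) - 1) - c * k ^ s * L ^ s) ''
            Set.Icc 1 (n : ℝ))
        ≤ C * (1 + (Real.log (n : ℝ)) ^ (s / (s - 1))) := by
  have ha : (0 : ℝ) < m - 1 := by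
    have : (2 : ℝ) ≤ m := by exact_mod_cast hm
    linarith
  set C := (m - 1 + 1 : ℝ) ^ (s / (s - 1)) * 2 ^ (s / (s - 1) - 1) / (c * L ^ s) ^ (1 / (s - 1))
  have hbound (n : ℕ) (hn : 1 ≤ n) :
      ∀ y ∈ (fun k : ℝ => k + k * log ((n : ℝ) / k) + k * log ((m : ℝ) - 1) - c * k ^ s * L ^ s) ''
        Icc 1 (n : ℝ), y ≤ C * (1 + log (n : ℝ) ^ (s / (s - 1))) :=
    Set.forall_mem_image.2 fun x hx => exponent_le_mul_one_add_log_rpow hs hc hL ha (Nat.one_le_cast.2 hn) hx.1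
  refine ⟨fun n hn => sum_choose_mul_pow_mul_exp_le (by linarith) ha hL.le n
    fun k hk hkn => le_csSup ⟨_, hbound n hn⟩ ⟨k, ⟨Nat.one_le_cast.2 hk, Nat.cast_le.2 hkn⟩, rfl⟩,
    C, fun n hn => csSup_le ((Set.nonempty_Icc.2 (Nat.one_le_cast.2 hn)).image _) (hbound n hn)⟩
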